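/- Let k₀ be a positive integer, U(y) = sin(k₀ y), and let f₀, g₀ be C¹ periodic functions on 𝕋 = [−π,π]. Define ρ(t,x,y) = f₀(y) sin(x + t sin(k₀ y)) + g₀(y) cos(x + t sin(k₀ y)) on 𝕋² (the solution of ∂_t ρ + sin(k₀ y) ∂_x ρ = 0 with initial data f₀(y) sin x + g₀(y) cos x). Then for all t ≥ 0, ‖ρ(t,·)‖²_{H¹(𝕋²)} ≤ 2 ‖ρ(0,·)‖²_{H¹(𝕋²)} + 10π k₀² t² ‖ρ(0,·)‖²_{L²(𝕋²)}. -/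

import Mathlib

open Real MeasureTheory intervalIntegral

noncomputable section

/-- Squared `H¹` norm on the torus `𝕋² = [−π,π]²`:
`‖ρ‖²_{H¹} = ∫_{𝕋²} (ρ² + (∂_x ρ)² + (∂_y ρ)²) dx dy`. -/
def h1NormSq (ρ : ℝ → ℝ → ℝ) : ℝ :=
  ∫ x in (-π)..π, ∫ y in (-π)..π,
    ((ρ x y) ^ 2 + (deriv (fun x' => ρ x' y) x) ^ 2 + (deriv (fun y' => ρ x y') y) ^ 2)

/-- Squared `L²` norm on the torus `𝕋² = [−π,π]²`. -/
def l2NormSq (ρ : ℝ → ℝ → ℝ) : ℝ :=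
  ∫ x in (-π)..π, ∫ y in (-π)..π, (ρ x y) ^ 2

/-- Solution of `∂_t ρ + sin(k₀ y) ∂_x ρ = 0` with data `f₀(y) sin x + g₀(y) cos x`. -/
def shearSol (k₀ : ℕ) (f₀ g₀ : ℝ → ℝ) (t x y : ℝ) : ℝ :=
  f₀ y * Real.sin (x + t * Real.sin ((k₀ : ℝ) * y)) +
    g₀ y * Real.cos (x + t * Real.sin ((k₀ : ℝ) * y))

/-!
For each `y`, `ρ(t, ·, y)` is a single Fourier mode `A sin θ + B cos θ` in the shifted variable
`θ = x + t sin(k₀ y)`, and its square integrates over `x` to `π (A² + B²)`. Moreover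
`ρ² + (∂ₓρ)² = f₀² + g₀²`, and `∂_y ρ` is again such a mode, with amplitudes
`f₀' - t k₀ cos(k₀ y) g₀` and `g₀' + t k₀ cos(k₀ y) f₀`. So both norms reduce to integrals over `y`
alone, and `(a + b)² ≤ 2a² + 2b²` together with `cos² ≤ 1` bounds the growing part by
`2 k₀² t² (f₀² + g₀²)`.
-/

theorem integral_sq_mul_sin_add_mul_cos (a b c : ℝ) :
    ∫ x in (-π)..π, (a * sin (x + c) + b * cos (x + c)) ^ 2 = π * (a ^ 2 + b ^ 2) := by
  have hper : Function.Periodic (fun x => (a * sin x + b * cos x) ^ 2) (2 * π) := by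
    intro x
    simp only [sin_add_two_pi, cos_add_two_pi]
  have hshift : ∫ x in (-π)..π, (a * sin (x + c) + b * cos (x + c)) ^ 2
      = ∫ x in (-π)..π, (a * sin x + b * cos x) ^ 2 := by
    rw [integral_comp_add_right (fun x => (a * sin x + b * cos x) ^ 2) c,
      show π + c = -π + c + 2 * π by ring, hper.intervalIntegral_add_eq (-π + c) (-π),
      show -π + 2 * π = π by ring]
  have hexpand : ∀ x, (a * sin x + b * cos x) ^ 2
      = a ^ 2 * sin x ^ 2 + (2 * a * b * (sin x * cos x) + b ^ 2 * cos x ^ 2) := fun x => by ring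
  have hint : ∀ f : ℝ → ℝ, Continuous f → IntervalIntegrable f volume (-π) π :=
    fun f hf => hf.intervalIntegrable _ _
  rw [hshift, integral_congr fun x _ => hexpand x,
    integral_add (hint _ (by fun_prop)) ((hint _ (by fun_prop)).add (hint _ (by fun_prop))),
    integral_add (hint _ (by fun_prop)) (hint _ (by fun_prop)),
    intervalIntegral.integral_const_mul, intervalIntegral.integral_const_mul,
    intervalIntegral.integral_const_mul, integral_sin_sq, integral_cos_sq, integral_sin_mul_cos₁]
  simp only [sin_neg, cos_neg, sin_pi, cos_pi]
  ring

theorem intervalIntegral_intervalIntegral_swap_of_continuous {E : Type*} [NormedAddCommGroup E]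
    [NormedSpace ℝ E] {F : ℝ → ℝ → E}
    (hF : Continuous (Function.uncurry F)) (a b c d : ℝ) :
    ∫ x in a..b, ∫ y in c..d, F x y = ∫ y in c..d, ∫ x in a..b, F x y :=
  intervalIntegral_intervalIntegral_swap <|
    (hF.continuousOn.integrableOn_compact (isCompact_uIcc.prod isCompact_uIcc)).mono_set
      (Set.prod_mono Set.uIoc_subset_uIcc Set.uIoc_subset_uIcc)

theorem HasDerivAt.mul_sin_add_mul_cos {a b φ : ℝ → ℝ} {a' b' φ' y : ℝ}
    (ha : HasDerivAt a a' y) (hb : HasDerivAt b b' y) (hφ : HasDerivAt φ φ' y) :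
    HasDerivAt (fun y => a y * Real.sin (φ y) + b y * Real.cos (φ y))
      ((a' - b y * φ') * Real.sin (φ y) + (b' + a y * φ') * Real.cos (φ y)) y :=
  ((ha.fun_mul hφ.sin).fun_add (hb.fun_mul hφ.cos)).congr_deriv (by ring)

section Shear

variable {k₀ : ℕ} {f₀ g₀ : ℝ → ℝ}

theorem deriv_shearSol_x (t x y : ℝ) :
    deriv (fun x' => shearSol k₀ f₀ g₀ t x' y) x =
      -g₀ y * sin (x + t * sin (k₀ * y)) + f₀ y * cos (x + t * sin (k₀ * y)) := by
  have hφ : HasDerivAt (fun x' => x' + t * sin (k₀ * y)) 1 x := (hasDerivAt_id x).add_const _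
  unfold shearSol
  rw [((hasDerivAt_const x (f₀ y)).mul_sin_add_mul_cos (hasDerivAt_const x (g₀ y)) hφ).deriv]
  ring

theorem deriv_shearSol_y (hf₀ : Differentiable ℝ f₀) (hg₀ : Differentiable ℝ g₀) (t x y : ℝ) :
    deriv (fun y' => shearSol k₀ f₀ g₀ t x y') y =
      (deriv f₀ y - t * k₀ * cos (k₀ * y) * g₀ y) * sin (x + t * sin (k₀ * y)) +
        (deriv g₀ y + t * k₀ * cos (k₀ * y) * f₀ y) * cos (x + t * sin (k₀ * y)) := by
  have hφ : HasDerivAt (fun y' => x + t * sin (k₀ * y')) (t * (cos (k₀ * y) * (k₀ * 1))) y :=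
    (((hasDerivAt_id' y).const_mul (k₀ : ℝ)).sin.const_mul t).const_add x
  unfold shearSol
  rw [((hf₀ y).hasDerivAt.mul_sin_add_mul_cos (hg₀ y).hasDerivAt hφ).deriv]
  ring

variable (k₀ f₀ g₀) in
def shearH1Density (t y : ℝ) : ℝ :=
  2 * (f₀ y ^ 2 + g₀ y ^ 2) + (deriv f₀ y - t * k₀ * cos (k₀ * y) * g₀ y) ^ 2 +
    (deriv g₀ y + t * k₀ * cos (k₀ * y) * f₀ y) ^ 2

theorem continuous_shearH1Density (hf₀ : ContDiff ℝ 1 f₀) (hg₀ : ContDiff ℝ 1 g₀) (t : ℝ) :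
    Continuous (shearH1Density k₀ f₀ g₀ t) := by
  have := hf₀.continuous; have := hg₀.continuous
  have := hf₀.continuous_deriv le_rfl; have := hg₀.continuous_deriv le_rfl
  unfold shearH1Density
  fun_prop

theorem l2NormSq_shearSol (hf₀ : Continuous f₀) (hg₀ : Continuous g₀) (t : ℝ) :
    l2NormSq (shearSol k₀ f₀ g₀ t) = π * ∫ y in (-π)..π, (f₀ y ^ 2 + g₀ y ^ 2) := by
  rw [l2NormSq, intervalIntegral_intervalIntegral_swap_of_continuous (by unfold shearSol; fun_prop),
    ← intervalIntegral.integral_const_mul]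
  exact integral_congr fun y _ => integral_sq_mul_sin_add_mul_cos _ _ _

theorem h1NormSq_shearSol (hf₀ : ContDiff ℝ 1 f₀) (hg₀ : ContDiff ℝ 1 g₀) (t : ℝ) :
    h1NormSq (shearSol k₀ f₀ g₀ t) = π * ∫ y in (-π)..π, shearH1Density k₀ f₀ g₀ t y := by
  have := hf₀.continuous; have := hg₀.continuous
  have := hf₀.continuous_deriv le_rfl; have := hg₀.continuous_deriv le_rfl
  have hintegrand : ∀ x y, shearSol k₀ f₀ g₀ t x y ^ 2 +
      deriv (fun x' => shearSol k₀ f₀ g₀ t x' y) x ^ 2 +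
      deriv (fun y' => shearSol k₀ f₀ g₀ t x y') y ^ 2 =
      (f₀ y ^ 2 + g₀ y ^ 2) +
        ((deriv f₀ y - t * k₀ * cos (k₀ * y) * g₀ y) * sin (x + t * sin (k₀ * y)) +
          (deriv g₀ y + t * k₀ * cos (k₀ * y) * f₀ y) * cos (x + t * sin (k₀ * y))) ^ 2 := by
    intro x y
    rw [deriv_shearSol_x, deriv_shearSol_y (hf₀.differentiable one_ne_zero)
      (hg₀.differentiable one_ne_zero), shearSol]
    linear_combination (f₀ y ^ 2 + g₀ y ^ 2) * sin_sq_add_cos_sq (x + t * sin (k₀ * y))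
  simp only [h1NormSq, hintegrand]
  rw [intervalIntegral_intervalIntegral_swap_of_continuous (by fun_prop),
    ← intervalIntegral.integral_const_mul]
  refine integral_congr fun y _ => ?_
  rw [integral_add intervalIntegrable_const (Continuous.intervalIntegrable (by fun_prop) _ _),
    intervalIntegral.integral_const, integral_sq_mul_sin_add_mul_cos, smul_eq_mul, shearH1Density]
  ring

variable (k₀ f₀ g₀) in
theorem shearH1Density_le (t y : ℝ) :
    shearH1Density k₀ f₀ g₀ t y ≤
      2 * shearH1Density k₀ f₀ g₀ 0 y + 2 * k₀ ^ 2 * t ^ 2 * (f₀ y ^ 2 + g₀ y ^ 2) := by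
  set s := t * k₀ * cos (k₀ * y)
  have hs : s ^ 2 ≤ k₀ ^ 2 * t ^ 2 := by
    calc s ^ 2 = (t * k₀) ^ 2 * cos (k₀ * y) ^ 2 := by ring
      _ ≤ (t * k₀) ^ 2 * 1 := by gcongr; exact cos_sq_le_one _
      _ = k₀ ^ 2 * t ^ 2 := by ring
  have hf := add_sq_le (a := deriv f₀ y) (b := -(s * g₀ y))
  have hg := add_sq_le (a := deriv g₀ y) (b := s * f₀ y)
  simp only [shearH1Density, zero_mul, sub_zero, add_zero]
  nlinarith [mul_le_mul_of_nonneg_right hs (by positivity : 0 ≤ f₀ y ^ 2 + g₀ y ^ 2)]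

theorem integral_shearH1Density_le (hf₀ : ContDiff ℝ 1 f₀) (hg₀ : ContDiff ℝ 1 g₀) (t : ℝ) :
    ∫ y in (-π)..π, shearH1Density k₀ f₀ g₀ t y ≤
      2 * (∫ y in (-π)..π, shearH1Density k₀ f₀ g₀ 0 y) +
        2 * k₀ ^ 2 * t ^ 2 * ∫ y in (-π)..π, (f₀ y ^ 2 + g₀ y ^ 2) := by
  have hE : Continuous fun y => f₀ y ^ 2 + g₀ y ^ 2 := by
    have := hf₀.continuous; have := hg₀.continuous; fun_prop
  have hD := continuous_shearH1Density (k₀ := k₀) hf₀ hg₀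
  have hD₀ : IntervalIntegrable (fun y => 2 * shearH1Density k₀ f₀ g₀ 0 y) volume (-π) π :=
    ((hD 0).const_mul 2).intervalIntegrable _ _
  have hE' : IntervalIntegrable (fun y => 2 * k₀ ^ 2 * t ^ 2 * (f₀ y ^ 2 + g₀ y ^ 2)) volume
      (-π) π := (hE.const_mul _).intervalIntegrable _ _
  rw [← intervalIntegral.integral_const_mul, ← intervalIntegral.integral_const_mul,
    ← integral_add hD₀ hE']
  exact integral_mono_on (by linarith [pi_pos]) ((hD t).intervalIntegrable _ _) (hD₀.add hE')
    fun y _ => shearH1Density_le k₀ f₀ g₀ t y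

end Shear

theorem h1_growth_upper_bound_general (k₀ : ℕ) (f₀ g₀ : ℝ → ℝ)
    (hf₀ : ContDiff ℝ 1 f₀) (hg₀ : ContDiff ℝ 1 g₀) :
    ∀ t : ℝ, 0 ≤ t →
      h1NormSq (shearSol k₀ f₀ g₀ t) ≤
        2 * h1NormSq (shearSol k₀ f₀ g₀ 0) +
          10 * π * (k₀ : ℝ) ^ 2 * t ^ 2 * l2NormSq (shearSol k₀ f₀ g₀ 0) := by
  intro t _
  rw [h1NormSq_shearSol hf₀ hg₀, h1NormSq_shearSol hf₀ hg₀,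
    l2NormSq_shearSol hf₀.continuous hg₀.continuous]
  have hE : 0 ≤ ∫ y in (-π)..π, (f₀ y ^ 2 + g₀ y ^ 2) :=
    integral_nonneg (by linarith [pi_pos]) fun y _ => by positivity
  have hbound := mul_le_mul_of_nonneg_left (integral_shearH1Density_le (k₀ := k₀) hf₀ hg₀ t)
    pi_pos.le
  have hslack : 0 ≤ (k₀ : ℝ) ^ 2 * t ^ 2 * (π * ∫ y in (-π)..π, (f₀ y ^ 2 + g₀ y ^ 2)) := by
    positivity
  nlinarith [pi_gt_three]

/-- For the shear `U(y) = sin(k₀ y)`, the `H¹` norm of the transported scalar grows at most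
quadratically: `‖ρ(t)‖²_{H¹} ≤ 2‖ρ(0)‖²_{H¹} + 10π k₀² t² ‖ρ(0)‖²_{L²}`. -/
theorem h1_growth_upper_bound (k₀ : ℕ) (hk₀ : 1 ≤ k₀) (f₀ g₀ : ℝ → ℝ)
    (hf₀ : ContDiff ℝ 1 f₀) (hg₀ : ContDiff ℝ 1 g₀)
    (hfper : ∀ y, f₀ (y + 2 * π) = f₀ y) (hgper : ∀ y, g₀ (y + 2 * π) = g₀ y) :
    ∀ t : ℝ, 0 ≤ t →
      h1NormSq (shearSol k₀ f₀ g₀ t) ≤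
        2 * h1NormSq (shearSol k₀ f₀ g₀ 0) +
          10 * π * (k₀ : ℝ) ^ 2 * t ^ 2 * l2NormSq (shearSol k₀ f₀ g₀ 0) :=
  h1_growth_upper_bound_general k₀ f₀ g₀ hf₀ hg₀
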